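/- Let H be obtained from graph G by adding new vertices a, b and edges {a,b} (weight 1), {a,s1} (weight 0), {b,s2} (weight 0), with all edges of G having weight 0, where s1, s2 ∈ V(G) and G has at most two connected components with s1 and s2 in distinct components whenever G is disconnected. Then H is connected, and every minimum spanning tree of H contains the edge {a,b} if and only if G is disconnected. -/

import Mathlib

open SimpleGraph

/-- `T` is a spanning tree of `G`: a subgraph (on the same vertex set) that is a tree. -/
def IsSpanningTree {V : Type} (G T : SimpleGraph V) : Prop :=
  T ≤ G ∧ T.IsTree

/-- The total weight of the edges of `T` with respect to the weight function `w`. -/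
noncomputable def totalWeight {V : Type} [Fintype V] (w : Sym2 V → ℝ)
    (T : SimpleGraph V) : ℝ :=
  ∑ e ∈ T.edgeSet.toFinite.toFinset, w e

/-- `T` is a minimum spanning tree of `G` w.r.t. `w`. -/
def IsMST {V : Type} [Fintype V] (G : SimpleGraph V) (w : Sym2 V → ℝ)
    (T : SimpleGraph V) : Prop :=
  IsSpanningTree G T ∧ ∀ T', IsSpanningTree G T' → totalWeight w T ≤ totalWeight w T'

/-- The graph `H` obtained from `G` by adding two new vertices `a = Sum.inr true` and
`b = Sum.inr false`, together with the edges `{a,b}`, `{a,s1}`, `{b,s2}`. -/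
def addTwoVertices {V : Type} (G : SimpleGraph V) (s1 s2 : V) : SimpleGraph (V ⊕ Bool) :=
  G.map Function.Embedding.inl ⊔
    SimpleGraph.fromEdgeSet
      {s(Sum.inr true, Sum.inr false), s(Sum.inr true, Sum.inl s1),
        s(Sum.inr false, Sum.inl s2)}


private lemma reach_lift {V : Type} {G G' : SimpleGraph V}
    (h : ∀ x y, G.Adj x y → G'.Reachable x y) {x y : V} (hxy : G.Reachable x y) :
    G'.Reachable x y := by
  obtain ⟨p⟩ := hxy
  induction p with
  | nil => exact Reachable.refl _
  | cons ha _ ih => exact (h _ _ ha).trans ih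

private lemma invar_lift {V α : Type} {G : SimpleGraph V} (f : V → α)
    (h : ∀ x y, G.Adj x y → f x = f y) {x y : V} (hxy : G.Reachable x y) :
    f x = f y := by
  obtain ⟨p⟩ := hxy
  induction p with
  | nil => rfl
  | cons ha _ ih => exact (h _ _ ha).trans ih

private lemma exists_spanning_tree' {V : Type} [Fintype V] :
    ∀ (n : ℕ) (G : SimpleGraph V), G.edgeSet.ncard = n → G.Connected →
      ∃ T, T ≤ G ∧ T.IsTree := by
  intro n
  induction n using Nat.strong_induction_on with
  | _ n ih =>
    intro G hn hG
    by_cases hac : G.IsAcyclic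
    · exact ⟨G, le_refl _, ⟨hG, hac⟩⟩
    · rw [isAcyclic_iff_forall_adj_isBridge] at hac
      push_neg at hac
      obtain ⟨u, v, huv, hbr⟩ := hac
      set G' := G \ fromEdgeSet {s(u, v)} with hG'def
      have hG'le : G' ≤ G := sdiff_le
      have hreach : G'.Reachable u v := by
        by_contra hcon
        exact hbr hcon
      have hadj' : ∀ x y, G.Adj x y → G'.Reachable x y := by
        intro x y hxy
        by_cases he : s(x, y) = s(u, v)
        · rw [Sym2.eq_iff] at he
          rcases he with ⟨rfl, rfl⟩ | ⟨rfl, rfl⟩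
          · exact hreach
          · exact hreach.symm
        · refine Adj.reachable ?_
          rw [hG'def, sdiff_adj, fromEdgeSet_adj]
          exact ⟨hxy, by simp [he]⟩
      have hG'conn : G'.Connected := by
        rw [connected_iff] at hG ⊢
        exact ⟨fun x y => reach_lift hadj' (hG.1 x y), hG.2⟩
      have hssub : G'.edgeSet ⊂ G.edgeSet := by
        constructor
        · exact fun e he => edgeSet_mono hG'le he
        · intro hsub
          have : s(u, v) ∈ G'.edgeSet := hsub (G.mem_edgeSet.mpr huv)
          rw [mem_edgeSet, hG'def, sdiff_adj, fromEdgeSet_adj] at this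
          exact this.2 ⟨rfl, huv.ne⟩
      have hlt : G'.edgeSet.ncard < n := by
        rw [← hn]
        exact Set.ncard_lt_ncard hssub (Set.toFinite _)
      obtain ⟨T, hT1, hT2⟩ := ih _ hlt G' rfl hG'conn
      exact ⟨T, hT1.trans hG'le, hT2⟩

open scoped Classical in
/-- Let `G` have at most two connected components, with `s1, s2` in distinct components
whenever `G` is disconnected.  Form `H` by adding vertices `a, b` and edges `{a,b}`
(weight 1), `{a,s1}` (weight 0), `{b,s2}` (weight 0), all edges of `G` having weight 0.
Then `H` is connected, and every minimum spanning tree of `H` contains `{a,b}` iff `G`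
is disconnected. -/
theorem stmt4 {V : Type} [Fintype V] (G : SimpleGraph V) (s1 s2 : V)
    (hcard : Nat.card G.ConnectedComponent ≤ 2)
    (hdis : ¬ G.Connected → G.connectedComponentMk s1 ≠ G.connectedComponentMk s2)
    (w : Sym2 (V ⊕ Bool) → ℝ)
    (hw : ∀ f, w f = if f = s(Sum.inr true, Sum.inr false) then 1 else 0) :
    (addTwoVertices G s1 s2).Connected ∧
      ((∀ T, IsMST (addTwoVertices G s1 s2) w T →
          s(Sum.inr true, Sum.inr false) ∈ T.edgeSet) ↔ ¬ G.Connected) := by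
  classical
  set H := addTwoVertices G s1 s2 with hHdef
  set a : V ⊕ Bool := Sum.inr true with hadef
  set b : V ⊕ Bool := Sum.inr false with hbdef
  set H₀ := H \ fromEdgeSet {s(a, b)} with hH₀def
  have h0le : H₀ ≤ H := sdiff_le
  -- basic adjacencies in H
  have hmapadj : ∀ u v : V, G.Adj u v → H.Adj (Sum.inl u) (Sum.inl v) := by
    intro u v h
    rw [hHdef, addTwoVertices, sup_adj]
    exact Or.inl ((SimpleGraph.map_adj _ _ _ _).mpr ⟨u, v, h, rfl, rfl⟩)
  have hab : H.Adj a b := by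
    rw [hHdef, addTwoVertices, sup_adj, fromEdgeSet_adj]
    exact Or.inr ⟨by simp [hadef, hbdef], by simp [hadef, hbdef]⟩
  have has1 : H.Adj a (Sum.inl s1) := by
    rw [hHdef, addTwoVertices, sup_adj, fromEdgeSet_adj]
    exact Or.inr ⟨by simp [hadef], by simp [hadef]⟩
  have hbs2 : H.Adj b (Sum.inl s2) := by
    rw [hHdef, addTwoVertices, sup_adj, fromEdgeSet_adj]
    exact Or.inr ⟨by simp [hbdef], by simp [hbdef]⟩
  have hreachG : ∀ u v : V, G.Reachable u v → H.Reachable (Sum.inl u) (Sum.inl v) :=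
    fun u v h => h.map (⟨Sum.inl, fun {u v} h => hmapadj u v h⟩ : G →g H)
  -- every vertex of G reaches s1 or s2
  have hcomp : ∀ v : V, G.Reachable v s1 ∨ G.Reachable v s2 := by
    intro v
    by_cases hc : G.Connected
    · exact Or.inl (hc.preconnected v s1)
    · by_contra hcon
      push_neg at hcon
      obtain ⟨h1, h2⟩ := hcon
      have hne := hdis hc
      have e1 : G.connectedComponentMk v ≠ G.connectedComponentMk s1 :=
        fun h => h1 (SimpleGraph.ConnectedComponent.exact h)
      have e2 : G.connectedComponentMk v ≠ G.connectedComponentMk s2 :=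
        fun h => h2 (SimpleGraph.ConnectedComponent.exact h)
      have hcard3 : ({G.connectedComponentMk v, G.connectedComponentMk s1,
          G.connectedComponentMk s2} : Finset G.ConnectedComponent).card = 3 := by
        rw [Finset.card_insert_of_notMem (by simp [e1, e2]),
          Finset.card_insert_of_notMem (by simp [hne]), Finset.card_singleton]
      have h3 : 3 ≤ Nat.card G.ConnectedComponent := by
        rw [Nat.card_eq_fintype_card, ← hcard3]
        exact Finset.card_le_univ _
      omega
  -- H is connected
  have hHa : ∀ x : V ⊕ Bool, H.Reachable x a := by
    intro x
    match x with
    | Sum.inr true => exact Reachable.refl a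
    | Sum.inr false => exact hab.symm.reachable
    | Sum.inl v =>
      rcases hcomp v with h | h
      · exact (hreachG v s1 h).trans has1.symm.reachable
      · exact ((hreachG v s2 h).trans hbs2.symm.reachable).trans hab.symm.reachable
  have hHconn : H.Connected := by
    rw [connected_iff]
    exact ⟨fun x y => (hHa x).trans (hHa y).symm, ⟨a⟩⟩
  refine ⟨hHconn, ?_, ?_⟩
  · -- mp : (∀ MST contains ab) → ¬ Connected
    intro hall
    by_contra hc
    -- H₀ is connected
    have hmapadj0 : ∀ u v : V, G.Adj u v → H₀.Adj (Sum.inl u) (Sum.inl v) := by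
      intro u v h
      rw [hH₀def, sdiff_adj, fromEdgeSet_adj]
      exact ⟨hmapadj u v h, by simp [hadef, hbdef]⟩
    let hhom0 : G →g H₀ := ⟨Sum.inl, fun {u v} h => hmapadj0 u v h⟩
    have has1' : H₀.Adj a (Sum.inl s1) := by
      rw [hH₀def, sdiff_adj, fromEdgeSet_adj]
      exact ⟨has1, by simp [hadef, hbdef]⟩
    have hbs2' : H₀.Adj b (Sum.inl s2) := by
      rw [hH₀def, sdiff_adj, fromEdgeSet_adj]
      exact ⟨hbs2, by simp [hadef, hbdef]⟩
    have h0a : ∀ x : V ⊕ Bool, H₀.Reachable x a := by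
      intro x
      match x with
      | Sum.inr true => exact Reachable.refl a
      | Sum.inr false =>
        exact hbs2'.reachable.trans
          (((hc.preconnected s2 s1).map hhom0).trans has1'.symm.reachable)
      | Sum.inl v =>
        exact ((hc.preconnected v s1).map hhom0).trans has1'.symm.reachable
    have h0conn : H₀.Connected := by
      rw [connected_iff]
      exact ⟨fun x y => (h0a x).trans (h0a y).symm, ⟨a⟩⟩
    obtain ⟨T, hTle, hTtree⟩ := exists_spanning_tree' _ H₀ rfl h0conn
    have habT : s(a, b) ∉ T.edgeSet := by
      intro hmem
      have h2 := hTle (T.mem_edgeSet.mp hmem)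
      rw [hH₀def, sdiff_adj, fromEdgeSet_adj] at h2
      exact h2.2 ⟨rfl, by simp [hadef, hbdef]⟩
    have hTw : totalWeight w T = 0 := by
      refine Finset.sum_eq_zero ?_
      intro e he
      rw [Set.Finite.mem_toFinset] at he
      rw [hw, if_neg]
      intro hrfl
      rw [hrfl] at he
      exact habT he
    have hMST : IsMST H w T := by
      refine ⟨⟨hTle.trans h0le, hTtree⟩, ?_⟩
      intro T' hT'
      rw [hTw]
      refine Finset.sum_nonneg ?_
      intro e _
      rw [hw]
      split <;> norm_num
    exact habT (hall T hMST)
  · -- mpr : ¬Connected → every MST (in fact spanning tree) contains ab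
    intro hnc T hMST
    obtain ⟨⟨hTle, hTtree⟩, -⟩ := hMST
    by_contra hmem
    have hTle0 : T ≤ H₀ := by
      intro x y hxy
      rw [hH₀def, sdiff_adj, fromEdgeSet_adj]
      refine ⟨hTle hxy, ?_⟩
      rintro ⟨hm, -⟩
      rw [Set.mem_singleton_iff] at hm
      exact hmem (hm ▸ T.mem_edgeSet.mpr hxy)
    have h0conn : H₀.Connected := hTtree.isConnected.mono hTle0
    set f : V ⊕ Bool → G.ConnectedComponent :=
      Sum.elim (fun v => G.connectedComponentMk v)
        (fun t => if t then G.connectedComponentMk s1 else G.connectedComponentMk s2)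
      with hfdef
    have hinv : ∀ x y, H₀.Adj x y → f x = f y := by
      intro x y hxy
      rw [hH₀def, sdiff_adj, fromEdgeSet_adj] at hxy
      obtain ⟨hHxy, hne⟩ := hxy
      have hxyne : x ≠ y := hHxy.ne
      have hne' : s(x, y) ≠ s(a, b) := fun h => hne ⟨by simp [h], hxyne⟩
      rw [hHdef, addTwoVertices, sup_adj] at hHxy
      rcases hHxy with hm | hfe
      · rw [SimpleGraph.map_adj] at hm
        obtain ⟨u, v', hadj, hx, hy⟩ := hm
        have hx' : Sum.inl u = x := hx
        have hy' : Sum.inl v' = y := hy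
        subst hx' hy'
        simpa [hfdef] using (SimpleGraph.ConnectedComponent.sound hadj.reachable)
      · rw [fromEdgeSet_adj] at hfe
        obtain ⟨hm, -⟩ := hfe
        simp only [Set.mem_insert_iff, Set.mem_singleton_iff] at hm
        rcases hm with hm | hm | hm
        · exact absurd hm hne'
        · rw [Sym2.eq_iff] at hm
          rcases hm with ⟨rfl, rfl⟩ | ⟨rfl, rfl⟩ <;> simp [hfdef, hadef]
        · rw [Sym2.eq_iff] at hm
          rcases hm with ⟨rfl, rfl⟩ | ⟨rfl, rfl⟩ <;> simp [hfdef, hbdef]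
    have hfab := invar_lift f hinv (h0conn.preconnected a b)
    simp only [hfdef, hadef, hbdef, Sum.elim_inr, if_true, if_false] at hfab
    exact hdis hnc (by simpa using hfab)
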